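/- arXiv:2109.14468 — 3 statements merged into one kernel-verified Lean document; each statement's English description precedes it below -/
import Mathlib

section
/- A framework (G,p) in a normed space X is infinitesimally rigid if and only if the intersection of the kernels of all generalised rigidity operators of (G,p) equals the space 𝒯(p) of trivial infinitesimal flexes. More precisely: a vector u ∈ X^V is an infinitesimal flex of (G,p) (i.e., lim_{t→0} (f_G(p+tu)−f_G(p))/t = 0) if and only if δf_G(p)(u) = 0 for every generalised derivative δf_G(p) ∈ ∂f_G(p) of the rigidity map at p. -/
open Filter Set

/-- The rigidity map of a graph with edge set `E` in a normed space `X`. -/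
noncomputable def rigidityMap {V X : Type*} [NormedAddCommGroup X]
    (E : Finset (V × V)) (p : V → X) : E → ℝ :=
  fun e => ‖p (e : V × V).1 - p (e : V × V).2‖

/-- The Clarke generalised differential of `f` at `x`: the convex hull of all limits of
derivatives `df(xₙ)` along sequences `xₙ → x` of differentiability points of `f`. -/
noncomputable def clarkeDiff {X Y : Type*} [NormedAddCommGroup X] [NormedSpace ℝ X]
    [NormedAddCommGroup Y] [NormedSpace ℝ Y] (f : X → Y) (x : X) : Set (X →L[ℝ] Y) :=
  convexHull ℝ {L : X →L[ℝ] Y | ∃ q : ℕ → X,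
    Tendsto q atTop (nhds x) ∧ (∀ n, DifferentiableAt ℝ f (q n)) ∧
    Tendsto (fun n => fderiv ℝ f (q n)) atTop (nhds L)}

/-- Subgradient inequality for differentiable convex functions. -/
lemma subgrad_aux {Y : Type*} [NormedAddCommGroup Y] [NormedSpace ℝ Y] {g : Y → ℝ}
    (hg : ConvexOn ℝ Set.univ g) {q : Y} {G : Y →L[ℝ] ℝ} (hG : HasFDerivAt g G q) (y : Y) :
    g q + G (y - q) ≤ g y := by
  set φ : ℝ → ℝ := fun t => g (q + t • (y - q)) with hφ
  have hconv : ConvexOn ℝ Set.univ φ := by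
    have h1 := hg.comp_affineMap (AffineMap.lineMap q y : ℝ →ᵃ[ℝ] Y)
    have h2 : (g ∘ (AffineMap.lineMap q y : ℝ →ᵃ[ℝ] Y)) = φ := by
      funext t
      simp only [Function.comp_apply, AffineMap.lineMap_apply_module', hφ]
      rw [add_comm]
    rw [h2, Set.preimage_univ] at h1
    exact h1
  have hd : HasDerivAt φ (G (y - q)) 0 := by
    have h1 : HasDerivAt (fun t : ℝ => q + t • (y - q)) (y - q) 0 := by
      simpa using ((hasDerivAt_id (0:ℝ)).smul_const (y - q)).const_add q
    have h0 : q = (q + (0:ℝ) • (y - q)) := by simp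
    have hG' : HasFDerivAt g G ((fun t : ℝ => q + t • (y - q)) 0) := by
      simpa using hG
    exact hG'.comp_hasDerivAt (0:ℝ) h1
  have hsl := hconv.le_slope_of_hasDerivAt (Set.mem_univ (0:ℝ)) (Set.mem_univ (1:ℝ))
    one_pos hd
  rw [slope_def_field] at hsl
  have hφ1 : φ 1 = g y := by simp [hφ]
  have hφ0 : φ 0 = g q := by simp [hφ]
  rw [hφ1, hφ0] at hsl
  have : G (y - q) ≤ g y - g q := by
    have h := hsl
    norm_num at h
    linarith
  linarith

section Aux

variable {V X : Type*} [Fintype V] [NormedAddCommGroup X] [NormedSpace ℝ X]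

/-- Each component of the rigidity map is convex. -/
lemma rigid_convex (E : Finset (V × V)) (e : E) :
    ConvexOn ℝ Set.univ (fun q : V → X => rigidityMap E q e) := by
  refine ⟨convex_univ, fun x _ y _ a b ha hb hab => ?_⟩
  simp only [rigidityMap, Pi.add_apply, Pi.smul_apply]
  have h : a • x (e : V × V).1 + b • y (e : V × V).1
      - (a • x (e : V × V).2 + b • y (e : V × V).2)
      = a • (x (e : V × V).1 - x (e : V × V).2) + b • (y (e : V × V).1 - y (e : V × V).2) := by
    simp only [smul_sub]; abel
  rw [h]
  calc ‖a • (x (e : V × V).1 - x (e : V × V).2) + b • (y (e : V × V).1 - y (e : V × V).2)‖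
      ≤ ‖a • (x (e : V × V).1 - x (e : V × V).2)‖
        + ‖b • (y (e : V × V).1 - y (e : V × V).2)‖ := norm_add_le _ _
    _ = a * ‖x (e : V × V).1 - x (e : V × V).2‖ + b * ‖y (e : V × V).1 - y (e : V × V).2‖ := by
        rw [norm_smul, norm_smul, Real.norm_eq_abs, Real.norm_eq_abs,
          abs_of_nonneg ha, abs_of_nonneg hb]
    _ = _ := by simp [smul_eq_mul]

/-- Componentwise Lipschitz bound for the rigidity map. -/
lemma rigid_lip_comp (E : Finset (V × V)) (w w' : V → X) (e : E) :
    |rigidityMap E w e - rigidityMap E w' e| ≤ 2 * dist w w' := by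
  simp only [rigidityMap]
  have h1 : |‖w (e : V × V).1 - w (e : V × V).2‖ - ‖w' (e : V × V).1 - w' (e : V × V).2‖|
      ≤ ‖(w (e : V × V).1 - w (e : V × V).2) - (w' (e : V × V).1 - w' (e : V × V).2)‖ :=
    abs_norm_sub_norm_le _ _
  have h2 : (w (e : V × V).1 - w (e : V × V).2) - (w' (e : V × V).1 - w' (e : V × V).2)
      = (w (e : V × V).1 - w' (e : V × V).1) - (w (e : V × V).2 - w' (e : V × V).2) := by abel
  have h3 : ‖(w (e : V × V).1 - w' (e : V × V).1) - (w (e : V × V).2 - w' (e : V × V).2)‖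
      ≤ ‖w (e : V × V).1 - w' (e : V × V).1‖ + ‖w (e : V × V).2 - w' (e : V × V).2‖ :=
    norm_sub_le _ _
  have h4 : ‖w (e : V × V).1 - w' (e : V × V).1‖ ≤ dist w w' := by
    rw [← dist_eq_norm]; exact dist_le_pi_dist w w' _
  have h5 : ‖w (e : V × V).2 - w' (e : V × V).2‖ ≤ dist w w' := by
    rw [← dist_eq_norm]; exact dist_le_pi_dist w w' _
  rw [h2] at h1
  linarith

lemma rigid_lip (E : Finset (V × V)) : LipschitzWith 2 (rigidityMap (X := X) E) := by
  apply LipschitzWith.of_dist_le_mul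
  intro w w'
  rw [dist_pi_le_iff (by positivity)]
  intro e
  rw [Real.dist_eq]
  exact_mod_cast rigid_lip_comp E w w' e

/-- Key subgradient inequality for the rigidity map at differentiability points. -/
lemma rigid_key (E : Finset (V × V)) {q : V → X}
    (hq : DifferentiableAt ℝ (rigidityMap E) q) (t : ℝ) (u : V → X) (e : E) :
    rigidityMap E q e + t * (fderiv ℝ (rigidityMap E) q u) e
      ≤ rigidityMap E (q + t • u) e := by
  have hG : HasFDerivAt (fun w => rigidityMap E w e)
      ((ContinuousLinearMap.proj e).comp (fderiv ℝ (rigidityMap E) q)) q :=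
    (ContinuousLinearMap.proj (R := ℝ) (φ := fun _ : E => ℝ) e).hasFDerivAt.comp q
      hq.hasFDerivAt
  have := subgrad_aux (rigid_convex E e) hG (q + t • u)
  have h1 : q + t • u - q = t • u := by abel
  rw [h1] at this
  simpa [map_smul, smul_eq_mul] using this

end Aux

/-- One-dimensional limit lemma for monotone slope functions. -/
lemma onedim_lim {σ : ℝ → ℝ}
    (hmono : ∀ s t : ℝ, s ≠ 0 → t ≠ 0 → s ≤ t → σ s ≤ σ t)
    {a b c d : ℕ → ℝ} (ha : ∀ k, 0 < a k) (hb : ∀ k, b k < 0)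
    (hc : ∀ k, σ (a k) ≤ c k) (hd : ∀ k, d k ≤ σ (b k))
    (hc0 : Tendsto c atTop (nhds 0)) (hd0 : Tendsto d atTop (nhds 0)) :
    Tendsto σ (nhdsWithin 0 {(0 : ℝ)}ᶜ) (nhds 0) := by
  have hpos : ∀ t : ℝ, 0 < t → 0 ≤ σ t := by
    intro t ht
    refine le_of_tendsto hd0 (Eventually.of_forall fun k => ?_)
    exact (hd k).trans (hmono _ _ (hb k).ne ht.ne' ((hb k).le.trans ht.le))
  have hneg : ∀ s : ℝ, s < 0 → σ s ≤ 0 := by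
    intro s hs
    refine ge_of_tendsto hc0 (Eventually.of_forall fun k => ?_)
    exact (hmono _ _ hs.ne (ha k).ne' (hs.le.trans (ha k).le)).trans (hc k)
  have hright : Tendsto σ (nhdsWithin 0 (Set.Ioi 0)) (nhds 0) := by
    rw [tendsto_order]
    constructor
    · intro ε hε
      filter_upwards [self_mem_nhdsWithin] with t ht
      exact lt_of_lt_of_le hε (hpos t ht)
    · intro ε hε
      obtain ⟨k, hk⟩ := ((tendsto_order.1 hc0).2 ε hε).exists
      filter_upwards [Ioc_mem_nhdsGT_of_mem (Set.left_mem_Ico.2 (ha k))] with t ht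
      exact lt_of_le_of_lt ((hmono _ _ ht.1.ne' (ha k).ne' ht.2).trans (hc k)) hk
  have hleft : Tendsto σ (nhdsWithin 0 (Set.Iio 0)) (nhds 0) := by
    rw [tendsto_order]
    constructor
    · intro ε hε
      obtain ⟨k, hk⟩ := ((tendsto_order.1 hd0).1 ε hε).exists
      filter_upwards [Ico_mem_nhdsLT_of_mem (Set.right_mem_Ioc.2 (hb k))] with t ht
      exact lt_of_lt_of_le hk ((hd k).trans (hmono _ _ (hb k).ne (ht.2).ne ht.1))
    · intro ε hε
      filter_upwards [self_mem_nhdsWithin] with t ht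
      exact lt_of_le_of_lt (hneg t ht) hε
  rw [← nhdsLT_sup_nhdsGT (0:ℝ)]
  rw [tendsto_sup]
  exact ⟨hleft, hright⟩

/-- A vector `u ∈ X^V` is an infinitesimal flex of the framework `(G,p)`, i.e.
`lim_{t→0} (f_G(p+tu) − f_G(p))/t = 0`, if and only if `δf_G(p)(u) = 0` for every
generalised rigidity operator `δf_G(p)` in the Clarke generalised differential
`∂f_G(p)` of the rigidity map at `p`. -/
theorem stmt6 {V X : Type*} [Fintype V] [NormedAddCommGroup X] [NormedSpace ℝ X]
    [FiniteDimensional ℝ X] (E : Finset (V × V)) (p u : V → X) :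
    Tendsto (fun t : ℝ => t⁻¹ • (rigidityMap E (p + t • u) - rigidityMap E p))
        (nhdsWithin 0 {(0 : ℝ)}ᶜ) (nhds 0)
      ↔ ∀ L ∈ clarkeDiff (rigidityMap E) p, L u = 0 := by
  set f := rigidityMap (X := X) E with hf
  constructor
  · intro hflex L hL
    have hσ : ∀ e : E, Tendsto (fun t : ℝ => t⁻¹ * (f (p + t • u) e - f p e))
        (nhdsWithin 0 {(0 : ℝ)}ᶜ) (nhds 0) := by
      intro e
      have := tendsto_pi_nhds.1 hflex e
      simpa [Pi.smul_apply, Pi.sub_apply, smul_eq_mul] using this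
    have hconv : Convex ℝ {L0 : (V → X) →L[ℝ] (E → ℝ) | L0 u = 0} := by
      intro L1 hL1 L2 hL2 a b _ _ _
      simp only [Set.mem_setOf_eq] at hL1 hL2 ⊢
      simp [ContinuousLinearMap.add_apply, ContinuousLinearMap.coe_smul', Pi.smul_apply,
        hL1, hL2]
    have hgen : {L0 : (V → X) →L[ℝ] (E → ℝ) | ∃ q : ℕ → V → X,
        Tendsto q atTop (nhds p) ∧ (∀ n, DifferentiableAt ℝ f (q n)) ∧
        Tendsto (fun n => fderiv ℝ f (q n)) atTop (nhds L0)}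
        ⊆ {L0 | L0 u = 0} := by
      rintro L0 ⟨q, hq, hdiff, hTen⟩
      have hcomp : ∀ e : E, ∀ t : ℝ, f p e + t * (L0 u) e ≤ f (p + t • u) e := by
        intro e t
        have hkeyn : ∀ n, f (q n) e + t * (fderiv ℝ f (q n) u) e ≤ f (q n + t • u) e :=
          fun n => rigid_key E (hdiff n) t u e
        have hconte : Continuous (fun w : V → X => f w e) :=
          ((continuous_apply ((e : V × V).1)).sub (continuous_apply ((e : V × V).2))).norm
        have h1 : Tendsto (fun n => f (q n) e + t * (fderiv ℝ f (q n) u) e) atTop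
            (nhds (f p e + t * (L0 u) e)) := by
          refine Tendsto.add ((hconte.tendsto p).comp hq) (Tendsto.const_mul t ?_)
          have happ : Continuous fun M : (V → X) →L[ℝ] (E → ℝ) => (M u) e :=
            (continuous_apply e).comp (ContinuousLinearMap.apply ℝ (E → ℝ) u).continuous
          exact (happ.tendsto L0).comp hTen
        have h2 : Tendsto (fun n => f (q n + t • u) e) atTop (nhds (f (p + t • u) e)) :=
          (hconte.tendsto _).comp (hq.add_const (t • u))
        exact le_of_tendsto_of_tendsto' h1 h2 hkeyn
      have hle : ∀ e : E, (L0 u) e ≤ 0 := by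
        intro e
        refine ge_of_tendsto ((hσ e).mono_left
          (nhdsWithin_mono 0 fun x (hx : x ∈ Set.Ioi (0:ℝ)) => hx.ne')) ?_
        filter_upwards [self_mem_nhdsWithin] with t (ht : (0:ℝ) < t)
        have := hcomp e t
        rw [inv_mul_eq_div, le_div_iff₀ ht]
        linarith
      have hge : ∀ e : E, 0 ≤ (L0 u) e := by
        intro e
        refine le_of_tendsto ((hσ e).mono_left
          (nhdsWithin_mono 0 fun x (hx : x ∈ Set.Iio (0:ℝ)) => hx.ne)) ?_
        filter_upwards [self_mem_nhdsWithin] with t (ht : t < (0:ℝ))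
        have := hcomp e t
        rw [inv_mul_eq_div, div_le_iff_of_neg ht]
        linarith
      funext e
      exact le_antisymm (hle e) (hge e)
    exact convexHull_min hgen hconv hL
  · intro hL
    letI : MeasurableSpace (V → X) := borel _
    haveI : BorelSpace (V → X) := ⟨rfl⟩
    set μ := (Module.finBasis ℝ (V → X)).addHaar with hμ
    have hlip := rigid_lip (X := X) E
    have hae : ∀ᵐ z ∂μ, DifferentiableAt ℝ f z := hlip.ae_differentiableAt
    have hex : ∀ (c : V → X) (r : ℝ), 0 < r →
        ∃ z, dist z c < r ∧ DifferentiableAt ℝ f z := by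
      intro c r hr
      by_contra hcon
      push_neg at hcon
      have hsub : Metric.ball c r ⊆ {z | ¬ DifferentiableAt ℝ f z} := fun z hz =>
        hcon z (Metric.mem_ball.1 hz)
      have h0 : μ {z | ¬ DifferentiableAt ℝ f z} = 0 := by
        exact hae
      exact (Metric.measure_ball_pos μ c hr).ne'
        (MeasureTheory.measure_mono_null hsub h0)
    set t : ℕ → ℝ := fun n => 1 / ((n : ℝ) + 1) with hts
    have ht_pos : ∀ n, 0 < t n := fun n => by positivity
    have ht0 : Tendsto t atTop (nhds 0) := tendsto_one_div_add_atTop_nhds_zero_nat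
    have claim : ∀ v : V → X, (∀ L ∈ clarkeDiff f p, L v = 0) →
        ∃ (D : ℕ → ((V → X) →L[ℝ] (E → ℝ))) (s : ℕ → ℝ), (∀ k, 0 < s k) ∧
          (∀ k (e : E), f (p + s k • v) e - f p e - 4 * (s k)^2 ≤ s k * ((D k) v) e) ∧
          Tendsto (fun k => ((D k) v : E → ℝ)) atTop (nhds 0) ∧
          Tendsto s atTop (nhds 0) := by
      intro v hv
      have hz : ∀ n, ∃ z, dist z (p + t n • v) < (t n)^2 ∧ DifferentiableAt ℝ f z :=
        fun n => hex _ _ (by positivity)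
      choose z hz1 hz2 using hz
      have hzp : Tendsto z atTop (nhds p) := by
        rw [tendsto_iff_dist_tendsto_zero]
        have hb : Tendsto (fun n => (t n)^2 + t n * ‖v‖) atTop (nhds 0) := by
          have := ((ht0.mul ht0).add (ht0.mul_const ‖v‖))
          simpa only [pow_two, zero_mul, zero_add, add_zero, mul_zero, zero_smul] using this
        refine squeeze_zero (fun n => dist_nonneg) (fun n => ?_) hb
        have h2 : dist (p + t n • v) p = t n * ‖v‖ := by
          rw [dist_eq_norm]
          have : p + t n • v - p = t n • v := by abel
          rw [this, norm_smul, Real.norm_eq_abs, abs_of_pos (ht_pos n)]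
        calc dist (z n) p ≤ dist (z n) (p + t n • v) + dist (p + t n • v) p :=
              dist_triangle _ _ _
          _ ≤ (t n)^2 + t n * ‖v‖ := by
              rw [h2]; exact add_le_add (hz1 n).le le_rfl
      have hbound : ∀ n, fderiv ℝ f (z n) ∈
          Metric.closedBall (0 : (V → X) →L[ℝ] (E → ℝ)) 2 := by
        intro n
        rw [Metric.mem_closedBall, dist_zero_right]
        exact_mod_cast norm_fderiv_le_of_lipschitz ℝ hlip
      obtain ⟨L, _, φ, hφ, hDL⟩ :=
        (isCompact_closedBall (0 : (V → X) →L[ℝ] (E → ℝ)) 2).tendsto_subseq hbound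
      have hLclarke : L ∈ clarkeDiff f p :=
        subset_convexHull ℝ _ ⟨fun k => z (φ k), hzp.comp hφ.tendsto_atTop,
          fun k => hz2 _, hDL⟩
      have hLv := hv L hLclarke
      refine ⟨fun k => fderiv ℝ f (z (φ k)), fun k => t (φ k),
        fun k => ht_pos _, ?_, ?_, ht0.comp hφ.tendsto_atTop⟩
      · intro k e
        set n := φ k with hn
        set s := t n with hs
        have hspos : (0:ℝ) < s := ht_pos n
        have key := rigid_key E (hz2 n) (-s) v e
        have hzz : z n + (-s) • v = z n - s • v := by
          rw [neg_smul, ← sub_eq_add_neg]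
        rw [hzz] at key
        have l1 : |f (z n) e - f (p + s • v) e| ≤ 2 * s^2 := by
          have := rigid_lip_comp E (z n) (p + s • v) e
          have hd := (hz1 n).le
          nlinarith [abs_nonneg (f (z n) e - f (p + s • v) e)]
        have l2 : |f (z n - s • v) e - f p e| ≤ 2 * s^2 := by
          have hdd : dist (z n - s • v) p = dist (z n) (p + s • v) := by
            rw [dist_eq_norm, dist_eq_norm]
            congr 1
            abel
          have := rigid_lip_comp E (z n - s • v) p e
          rw [hdd] at this
          have hd := (hz1 n).le
          nlinarith [abs_nonneg (f (z n - s • v) e - f p e)]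
        have a1 := abs_le.1 l1
        have a2 := abs_le.1 l2
        nlinarith [a1.1, a1.2, a2.1, a2.2]
      · rw [← hLv]
        have happ : Continuous fun M : (V → X) →L[ℝ] (E → ℝ) => M v :=
          (ContinuousLinearMap.apply ℝ (E → ℝ) v).continuous
        exact (happ.tendsto L).comp hDL
    obtain ⟨D1, s1, hs1pos, hkey1, hD1, hs10⟩ := claim u hL
    obtain ⟨D2, s2, hs2pos, hkey2, hD2, hs20⟩ := claim (-u)
      (fun L hLc => by rw [map_neg, hL L hLc, neg_zero])
    rw [tendsto_pi_nhds]
    intro e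
    simp only [Pi.smul_apply, Pi.sub_apply, smul_eq_mul, Pi.zero_apply]
    set h : ℝ → ℝ := fun τ => f (p + τ • u) e with hh
    have hconvh : ConvexOn ℝ Set.univ h := by
      have h1 := (rigid_convex E e).comp_affineMap
        (AffineMap.lineMap p (p + u) : ℝ →ᵃ[ℝ] (V → X))
      have h2 : ((fun q : V → X => f q e) ∘
          (AffineMap.lineMap p (p + u) : ℝ →ᵃ[ℝ] (V → X))) = h := by
        funext τ
        simp only [Function.comp_apply, AffineMap.lineMap_apply_module', hh]
        congr 1
        rw [add_sub_cancel_left, add_comm]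
      rw [h2, Set.preimage_univ] at h1
      exact h1
    have hh0 : h 0 = f p e := by simp [hh]
    have hmono : ∀ a b : ℝ, a ≠ 0 → b ≠ 0 → a ≤ b →
        a⁻¹ * (f (p + a • u) e - f p e) ≤ b⁻¹ * (f (p + b • u) e - f p e) := by
      intro a b ha hb hab
      have := hconvh.slope_mono (Set.mem_univ 0)
        (by simp [ha] : a ∈ Set.univ \ {0}) (by simp [hb] : b ∈ Set.univ \ {0}) hab
      rw [slope_def_field, slope_def_field, hh0] at this
      simp only [sub_zero] at this
      rw [inv_mul_eq_div, inv_mul_eq_div]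
      exact this
    refine onedim_lim hmono (a := s1) (b := fun k => -(s2 k))
      (c := fun k => ((D1 k) u) e + 4 * s1 k)
      (d := fun k => -(((D2 k) (-u)) e + 4 * s2 k))
      hs1pos (fun k => neg_lt_zero.2 (hs2pos k)) ?_ ?_ ?_ ?_
    · intro k
      show (s1 k)⁻¹ * (f (p + s1 k • u) e - f p e) ≤ (D1 k) u e + 4 * s1 k
      rw [inv_mul_eq_div, div_le_iff₀ (hs1pos k)]
      nlinarith [hkey1 k e]
    · intro k
      show -((D2 k) (-u) e + 4 * s2 k) ≤ (-(s2 k))⁻¹ * (f (p + (-(s2 k)) • u) e - f p e)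
      have hrw : p + (-(s2 k)) • u = p + s2 k • (-u) := by
        rw [neg_smul, ← smul_neg]
      rw [hrw, inv_neg, neg_mul]
      apply neg_le_neg
      rw [inv_mul_eq_div, div_le_iff₀ (hs2pos k)]
      nlinarith [hkey2 k e]
    · have := (tendsto_pi_nhds.1 hD1 e).add (hs10.const_mul 4)
      simpa using this
    · have := ((tendsto_pi_nhds.1 hD2 e).add (hs20.const_mul 4)).neg
      simpa using this
end

section
/- Every prestress stable second-order well-positioned framework in a normed space is second-order rigid: if (u,u') is a second-order flex, i.e., u ∈ ker df_G(p) and Δ_{p_v−p_w}(u_v−u_w,u_v−u_w) + φ_{p_v−p_w}(u'_v−u'_w) = 0 for all edges vw, then u ∈ 𝒯(p). Key computation: for any equilibrium stress a and any second-order flex (u,u'), H_a(u) = Σ_{vw∈E} a_{vw} Δ_{p_v−p_w}(u_v−u_w,u_v−u_w) = 0. -/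
/-!
On a second-order flex `(u, u')` the edge terms `φ_e(u_e)` vanish and `Δ_e(u_e, u_e) = -φ_e(u'_e)`,
so the prestress energy of `u` is `-∑ a_e φ_e(u'_e)`. Summing by vertices instead of edges, this
is `-∑ v, (∑ e, ±a_e φ_e)(u'_v)`, which is zero because `a` is an equilibrium stress; prestress
stability then puts `u` in `T`.
-/

open Filter Asymptotics

/-- `φ` and `Δ` are the derivative and (symmetric) Hessian of the norm of `X` at `x`. -/
def IsSecondDerivOfNormAt {X : Type*} [NormedAddCommGroup X] [NormedSpace ℝ X]
    (φ : X →L[ℝ] ℝ) (Δ : X →L[ℝ] X →L[ℝ] ℝ) (x : X) : Prop :=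
  (∀ u v : X, Δ u v = Δ v u) ∧
    (fun h : X => ‖x + h‖ - ‖x‖ - φ h - (1 / 2) * Δ h h) =o[nhds 0] fun h : X => ‖h‖ ^ 2

/-- `a` is a (normalised) equilibrium stress of the framework. -/
def IsEquilibriumStress {V E X : Type*} [Fintype E] [DecidableEq V]
    [NormedAddCommGroup X] [NormedSpace ℝ X]
    (ends : E → V × V) (φ : E → (X →L[ℝ] ℝ)) (a : E → ℝ) : Prop :=
  ∀ v : V, ∑ e : E,
    ((if (ends e).1 = v then a e else 0) - (if (ends e).2 = v then a e else 0)) • φ e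
      = (0 : X →L[ℝ] ℝ)

/-- The framework is prestress stable. -/
def PrestressStable {V E X : Type*} [Fintype V] [Fintype E] [DecidableEq V]
    [NormedAddCommGroup X] [NormedSpace ℝ X]
    (ends : E → V × V) (φ : E → (X →L[ℝ] ℝ)) (Δ : E → (X →L[ℝ] X →L[ℝ] ℝ))
    (T : Submodule ℝ (V → X)) : Prop :=
  ∃ a b : E → ℝ, IsEquilibriumStress ends φ a ∧ (∀ e : E, 0 < b e) ∧
    (∀ u : V → X, 0 ≤ ∑ e : E,
      (a e * Δ e (u (ends e).1 - u (ends e).2) (u (ends e).1 - u (ends e).2)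
        + b e * (φ e (u (ends e).1 - u (ends e).2)) ^ 2)) ∧
    (∀ u : V → X, (∑ e : E,
      (a e * Δ e (u (ends e).1 - u (ends e).2) (u (ends e).1 - u (ends e).2)
        + b e * (φ e (u (ends e).1 - u (ends e).2)) ^ 2)) = 0 ↔ u ∈ T)

section Stress

variable {V E X : Type*} [Fintype V] [Fintype E] [DecidableEq V]
  [NormedAddCommGroup X] [NormedSpace ℝ X]
  {ends : E → V × V} {φ : E → (X →L[ℝ] ℝ)} {a : E → ℝ}

theorem IsEquilibriumStress.sum_mul_apply_sub_eq_zero (ha : IsEquilibriumStress ends φ a)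
    (w : V → X) : ∑ e : E, a e * φ e (w (ends e).1 - w (ends e).2) = 0 :=
  calc ∑ e : E, a e * φ e (w (ends e).1 - w (ends e).2)
      = ∑ e : E, ∑ v : V,
          ((if (ends e).1 = v then a e else 0) - (if (ends e).2 = v then a e else 0))
            * φ e (w v) := by
        refine Finset.sum_congr rfl fun e _ => ?_
        simp only [map_sub, mul_sub, sub_mul, ite_mul, zero_mul, Finset.sum_sub_distrib,
          Finset.sum_ite_eq, Finset.mem_univ, if_true]
    _ = ∑ v : V, (∑ e : E,
          ((if (ends e).1 = v then a e else 0) - (if (ends e).2 = v then a e else 0))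
            • φ e) (w v) := by
        rw [Finset.sum_comm]
        simp only [sum_apply, smul_apply, smul_eq_mul]
    _ = 0 := Finset.sum_eq_zero fun v _ => by rw [ha v, zero_apply]

theorem IsEquilibriumStress.sum_mul_hessian_eq_zero_of_secondOrderFlex
    (ha : IsEquilibriumStress ends φ a) {Δ : E → (X →L[ℝ] X →L[ℝ] ℝ)} {u u' : V → X}
    (hflex : ∀ e : E, Δ e (u (ends e).1 - u (ends e).2) (u (ends e).1 - u (ends e).2)
      + φ e (u' (ends e).1 - u' (ends e).2) = 0) :
    ∑ e : E, a e * Δ e (u (ends e).1 - u (ends e).2) (u (ends e).1 - u (ends e).2) = 0 :=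
  calc ∑ e : E, a e * Δ e (u (ends e).1 - u (ends e).2) (u (ends e).1 - u (ends e).2)
      = -∑ e : E, a e * φ e (u' (ends e).1 - u' (ends e).2) := by
        rw [← Finset.sum_neg_distrib]
        refine Finset.sum_congr rfl fun e _ => ?_
        rw [eq_neg_of_add_eq_zero_left (hflex e), mul_neg]
    _ = 0 := by rw [ha.sum_mul_apply_sub_eq_zero, neg_zero]

end Stress

theorem stmt11_general {V E X : Type*} [Fintype V] [Fintype E] [DecidableEq V]
    [NormedAddCommGroup X] [NormedSpace ℝ X]
    (ends : E → V × V)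
    (φ : E → (X →L[ℝ] ℝ)) (Δ : E → (X →L[ℝ] X →L[ℝ] ℝ))
    (T : Submodule ℝ (V → X))
    (hps : PrestressStable ends φ Δ T) :
    ∀ u u' : V → X,
      (∀ e : E, φ e (u (ends e).1 - u (ends e).2) = 0) →
      (∀ e : E, Δ e (u (ends e).1 - u (ends e).2) (u (ends e).1 - u (ends e).2)
        + φ e (u' (ends e).1 - u' (ends e).2) = 0) →
      u ∈ T := by
  intro u u' hker hflex
  obtain ⟨a, b, ha, -, -, hT⟩ := hps
  refine (hT u).1 ?_
  simp only [hker, zero_pow two_ne_zero, mul_zero, add_zero]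
  exact ha.sum_mul_hessian_eq_zero_of_secondOrderFlex hflex

/-- Every prestress stable second-order well-positioned framework is second-order rigid:
if `(u,u')` is a second-order flex, i.e. `u ∈ ker df_G(p)` and
`Δ_{p_v−p_w}(u_v−u_w,u_v−u_w) + φ_{p_v−p_w}(u'_v−u'_w) = 0` for all edges `vw`,
then `u ∈ 𝒯(p)`. -/
theorem stmt11 {V E X : Type*} [Fintype V] [Fintype E] [DecidableEq V]
    [NormedAddCommGroup X] [NormedSpace ℝ X] [FiniteDimensional ℝ X]
    (ends : E → V × V) (p : V → X)
    (φ : E → (X →L[ℝ] ℝ)) (Δ : E → (X →L[ℝ] X →L[ℝ] ℝ))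
    (hsd : ∀ e : E, IsSecondDerivOfNormAt (φ e) (Δ e) (p (ends e).1 - p (ends e).2))
    (T : Submodule ℝ (V → X))
    (hps : PrestressStable ends φ Δ T) :
    ∀ u u' : V → X,
      (∀ e : E, φ e (u (ends e).1 - u (ends e).2) = 0) →
      (∀ e : E, Δ e (u (ends e).1 - u (ends e).2) (u (ends e).1 - u (ends e).2)
        + φ e (u' (ends e).1 - u' (ends e).2) = 0) →
      u ∈ T :=
  stmt11_general ends φ Δ T hps
end

section
/- In a polyhedral normed space, a framework (G,p) is locally rigid if and only if it is continuously rigid. -/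
/-!
Along a flex, local rigidity makes "congruent to `p`" a locally constant property of the time
parameter, hence constant on the connected interval `[0, 1]`.

Conversely, let `‖d'‖ = ‖d‖` with `d'` close to `d`. A functional of the polyhedral norm attaining
`‖d'‖` at `d'` must already attain `‖d‖` at `d`, with the same sign, so it is constant on the
segment `[d, d']`, which therefore lies on the sphere of radius `‖d‖`. Applied to every edge, this
shows that a nearby equivalent placement `q` is reached from `p` by the linear flex
`t ↦ p + t • (q - p)`.
-/

open Set Filter Topology

namespace Framework

variable {V X : Type*} [SeminormedAddCommGroup X]

def Equivalent (E : Finset (V × V)) (p q : V → X) : Prop :=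
  ∀ e ∈ E, ‖q e.1 - q e.2‖ = ‖p e.1 - p e.2‖

def Congruent (p q : V → X) : Prop :=
  ∃ g : X ≃ᵢ X, ∀ v, g (p v) = q v

def IsLocallyRigid (E : Finset (V × V)) (p : V → X) : Prop :=
  ∃ ε > (0 : ℝ), ∀ q : V → X, Equivalent E p q → (∀ v, ‖q v - p v‖ < ε) → Congruent p q

def IsContinuouslyRigid (E : Finset (V × V)) (p : V → X) : Prop :=
  ∀ γ : ℝ → V → X, ContinuousOn γ (Icc 0 1) → γ 0 = p →
    (∀ t ∈ Icc (0 : ℝ) 1, Equivalent E p (γ t)) → ∀ t ∈ Icc (0 : ℝ) 1, Congruent p (γ t)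

theorem Congruent.refl (p : V → X) : Congruent p p :=
  ⟨IsometryEquiv.refl X, fun _ => rfl⟩

theorem Congruent.of_near_congruent {E : Finset (V × V)} {p q r : V → X} {ε : ℝ}
    (hloc : ∀ q : V → X, Equivalent E p q → (∀ v, ‖q v - p v‖ < ε) → Congruent p q)
    (hq : Congruent p q) (hr : Equivalent E p r) (hrq : ∀ v, ‖r v - q v‖ < ε) :
    Congruent p r := by
  obtain ⟨g, hg⟩ := hq
  have hg_norm : ∀ x y, ‖g.symm x - g.symm y‖ = ‖x - y‖ := fun x y => by
    simp only [← dist_eq_norm, IsometryEquiv.dist_eq]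
  have hgq : ∀ v, g.symm (q v) = p v := fun v => g.symm_apply_eq.2 (hg v).symm
  obtain ⟨h, hh⟩ := hloc (fun v => g.symm (r v))
    (fun e he => (hg_norm _ _).trans (hr e he))
    (fun v => by rw [← hgq v, hg_norm]; exact hrq v)
  exact ⟨h.trans g, fun v => by simp [hh v]⟩

theorem IsLocallyRigid.congruent_of_isPreconnected [Fintype V] {T : Type*} [TopologicalSpace T]
    {E : Finset (V × V)} {p : V → X} (h : IsLocallyRigid E p) {s : Set T} (hs : IsPreconnected s)
    {γ : T → V → X} (hγ : ContinuousOn γ s) (hflex : ∀ t ∈ s, Equivalent E p (γ t))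
    {t₀ t : T} (ht₀ : t₀ ∈ s) (ht : t ∈ s) (h₀ : Congruent p (γ t₀)) : Congruent p (γ t) := by
  obtain ⟨ε, hε, hloc⟩ := h
  have := isPreconnected_iff_preconnectedSpace.1 hs
  have hconst : IsLocallyConstant fun t : s => Congruent p (γ t) := by
    refine (IsLocallyConstant.iff_eventually_eq _).2 fun t => ?_
    filter_upwards [(hγ.domRestrict.tendsto t).eventually (Metric.ball_mem_nhds _ hε)]
      with t' ht'
    have hnear : ∀ v, ‖γ t' v - γ t v‖ < ε := by
      simpa only [dist_eq_norm, Set.domRestrict_apply] using (dist_pi_lt_iff hε).1 ht'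
    exact propext ⟨fun h' => h'.of_near_congruent hloc (hflex t t.2)
        fun v => norm_sub_rev (γ t v) (γ t' v) ▸ hnear v,
      fun h' => h'.of_near_congruent hloc (hflex t' t'.2) hnear⟩
  exact hconst.apply_eq_of_preconnectedSpace ⟨t₀, ht₀⟩ ⟨t, ht⟩ ▸ h₀

theorem IsLocallyRigid.isContinuouslyRigid [Fintype V] {E : Finset (V × V)} {p : V → X}
    (h : IsLocallyRigid E p) : IsContinuouslyRigid E p :=
  fun _ hγ hγ0 hflex _ ht => h.congruent_of_isPreconnected isPreconnected_Icc hγ hflex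
    (left_mem_Icc.2 zero_le_one) ht (hγ0 ▸ Congruent.refl p)

theorem IsLocallyRigid.of_eventually [Fintype V] {E : Finset (V × V)} {p : V → X}
    (h : ∀ᶠ q in 𝓝 p, Equivalent E p q → Congruent p q) : IsLocallyRigid E p := by
  obtain ⟨ε, hε, hq⟩ := Metric.eventually_nhds_iff.1 h
  exact ⟨ε, hε, fun q hE hnear =>
    hq ((dist_pi_lt_iff hε).2 fun v => (dist_eq_norm _ _).trans_lt (hnear v)) hE⟩

end Framework

theorem eventually_abs_eq_imp_eq {α : Type*} [TopologicalSpace α] {φ : α → ℝ} {a : α} {m : ℝ}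
    (hφ : ContinuousAt φ a) (ha : |φ a| ≤ m) (hm : 0 < m) :
    ∀ᶠ y in 𝓝 a, |φ y| = m → φ y = φ a := by
  rcases ha.lt_or_eq with ha | ha
  · filter_upwards [(continuous_abs.continuousAt.comp hφ).eventually (gt_mem_nhds ha)]
      with y hy hy'
    exact absurd hy' (ne_of_lt hy)
  · filter_upwards [hφ.eventually (Metric.ball_mem_nhds _ hm)] with y hy hy'
    rcases abs_eq_abs.1 (hy'.trans ha.symm) with h | h
    · exact h
    · have hdist : |φ y - φ a| = 2 * m := by
        rw [← ha, h, show -φ a - φ a = -(2 * φ a) by ring, abs_neg, abs_mul, abs_two]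
      rw [Real.dist_eq, hdist] at hy
      linarith

section Polyhedral

variable {X : Type*} [SeminormedAddCommGroup X] [NormedSpace ℝ X]
  {S : Finset (X →L[ℝ] ℝ)} {hS : S.Nonempty}

theorem abs_apply_le_norm_of_polyhedral (hnorm : ∀ x : X, ‖x‖ = S.sup' hS fun f => |f x|)
    {f : X →L[ℝ] ℝ} (hf : f ∈ S) (x : X) : |f x| ≤ ‖x‖ :=
  hnorm x ▸ Finset.le_sup' (fun f : X →L[ℝ] ℝ => |f x|) hf

theorem eventually_segment_subset_sphere_of_polyhedral
    (hnorm : ∀ x : X, ‖x‖ = S.sup' hS fun f => |f x|) (d : X) :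
    ∀ᶠ d' in 𝓝 d, ‖d'‖ = ‖d‖ → segment ℝ d d' ⊆ Metric.sphere 0 ‖d‖ := by
  suffices h : ∀ᶠ d' in 𝓝 d, ‖d'‖ = ‖d‖ → ∀ x ∈ segment ℝ d d', ‖d‖ ≤ ‖x‖ by
    filter_upwards [h] with d' h hd' x hx
    have hball : x ∈ Metric.closedBall 0 ‖d‖ :=
      (convex_closedBall 0 ‖d‖).segment_subset (by simp) (by simp [hd']) hx
    exact mem_sphere_zero_iff_norm.2 (le_antisymm (mem_closedBall_zero_iff.1 hball) (h hd' x hx))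
  rcases (norm_nonneg d).eq_or_lt with hd | hd
  · exact .of_forall fun _ _ x _ => hd ▸ norm_nonneg x
  have hactive : ∀ᶠ d' in 𝓝 d, ∀ f ∈ S, |f d'| = ‖d‖ → f d' = f d :=
    (eventually_all_finset S).2 fun f hf => eventually_abs_eq_imp_eq f.continuous.continuousAt
      (abs_apply_le_norm_of_polyhedral hnorm hf d) hd
  filter_upwards [hactive] with d' hactive hd' x hx
  obtain ⟨j, hj, hjd'⟩ := S.exists_mem_eq_sup' hS fun f => |f d'|
  have hnorm_d' : ‖d‖ = |j d'| := by rw [← hjd', ← hnorm, hd']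
  have hjd : j d' = j d := hactive j hj hnorm_d'.symm
  obtain ⟨a, b, -, -, hab, rfl⟩ := hx
  calc ‖d‖ = |j d'| := hnorm_d'
    _ = |j (a • d + b • d')| := by
      rw [map_add, map_smul, map_smul, hjd, smul_eq_mul, smul_eq_mul, ← add_mul, hab, one_mul]
    _ ≤ ‖a • d + b • d'‖ := abs_apply_le_norm_of_polyhedral hnorm hj _

namespace Framework

variable {V : Type*}

theorem eventually_equivalent_lineMap_of_polyhedral
    (hnorm : ∀ x : X, ‖x‖ = S.sup' hS fun f => |f x|) (E : Finset (V × V)) (p : V → X) :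
    ∀ᶠ q in 𝓝 p, Equivalent E p q →
      ∀ t ∈ Icc (0 : ℝ) 1, Equivalent E p (AffineMap.lineMap p q t) := by
  have hedge : ∀ e ∈ E, ∀ᶠ q in 𝓝 p, ‖q e.1 - q e.2‖ = ‖p e.1 - p e.2‖ →
      segment ℝ (p e.1 - p e.2) (q e.1 - q e.2) ⊆ Metric.sphere 0 ‖p e.1 - p e.2‖ :=
    fun e _ => (((continuous_apply e.1).sub (continuous_apply e.2)).tendsto p).eventually
      (eventually_segment_subset_sphere_of_polyhedral hnorm _)
  filter_upwards [(eventually_all_finset E).2 hedge] with q hq hqE t ht e he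
  have hsub : AffineMap.lineMap p q t e.1 - AffineMap.lineMap p q t e.2 =
      AffineMap.lineMap (p e.1 - p e.2) (q e.1 - q e.2) t := by
    simp only [AffineMap.pi_lineMap_apply]
    exact AffineMap.lineMap_vsub_lineMap (p e.1) (q e.1) (p e.2) (q e.2) t
  rw [hsub, ← mem_sphere_zero_iff_norm]
  exact hq e he (hqE e he) <|
    segment_eq_image_lineMap ℝ (p e.1 - p e.2) (q e.1 - q e.2) ▸ mem_image_of_mem _ ht

theorem IsContinuouslyRigid.isLocallyRigid_of_polyhedral [Fintype V]
    (hnorm : ∀ x : X, ‖x‖ = S.sup' hS fun f => |f x|) {E : Finset (V × V)} {p : V → X}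
    (h : IsContinuouslyRigid E p) : IsLocallyRigid E p :=
  .of_eventually <| (eventually_equivalent_lineMap_of_polyhedral hnorm E p).mono fun q hq hE => by
    simpa using h (AffineMap.lineMap p q) AffineMap.lineMap_continuous.continuousOn
      (AffineMap.lineMap_apply_zero p q) (hq hE) 1 (right_mem_Icc.2 zero_le_one)

end Framework

end Polyhedral

open Framework in
theorem stmt14_general {V X : Type*} [Fintype V] [NormedAddCommGroup X] [NormedSpace ℝ X]
    (S : Finset (X →L[ℝ] ℝ)) (hS : S.Nonempty)
    (hnorm : ∀ x : X, ‖x‖ = S.sup' hS fun f => |f x|)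
    (E : Finset (V × V)) (p : V → X) :
    (∃ ε > (0 : ℝ), ∀ q : V → X,
        (∀ e ∈ E, ‖q e.1 - q e.2‖ = ‖p e.1 - p e.2‖) →
        (∀ v : V, ‖q v - p v‖ < ε) →
        ∃ g : X ≃ᵢ X, ∀ v : V, g (p v) = q v)
    ↔ (∀ γ : ℝ → V → X, ContinuousOn γ (Set.Icc 0 1) → γ 0 = p →
        (∀ t ∈ Set.Icc (0 : ℝ) 1, ∀ e ∈ E, ‖γ t e.1 - γ t e.2‖ = ‖p e.1 - p e.2‖) →
        ∀ t ∈ Set.Icc (0 : ℝ) 1, ∃ g : X ≃ᵢ X, ∀ v : V, g (p v) = γ t v) :=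
  show IsLocallyRigid E p ↔ IsContinuouslyRigid E p from
    ⟨IsLocallyRigid.isContinuouslyRigid, IsContinuouslyRigid.isLocallyRigid_of_polyhedral hnorm⟩

/-- In a polyhedral normed space (the norm is the maximum of finitely many `|fᵢ(x)|` for
linear functionals `fᵢ`), a framework `(G,p)` is locally rigid (every nearby equivalent
placement is congruent to `p` via an isometry of `X`) if and only if it is continuously
rigid (every continuous flex starting at `p` stays congruent to `p`). -/
theorem stmt14 {V X : Type*} [Fintype V] [NormedAddCommGroup X] [NormedSpace ℝ X]
    [FiniteDimensional ℝ X]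
    (S : Finset (X →L[ℝ] ℝ)) (hS : S.Nonempty)
    (hnorm : ∀ x : X, ‖x‖ = S.sup' hS fun f => |f x|)
    (E : Finset (V × V)) (p : V → X) :
    (∃ ε > (0 : ℝ), ∀ q : V → X,
        (∀ e ∈ E, ‖q e.1 - q e.2‖ = ‖p e.1 - p e.2‖) →
        (∀ v : V, ‖q v - p v‖ < ε) →
        ∃ g : X ≃ᵢ X, ∀ v : V, g (p v) = q v)
    ↔ (∀ γ : ℝ → V → X, ContinuousOn γ (Set.Icc 0 1) → γ 0 = p →
        (∀ t ∈ Set.Icc (0 : ℝ) 1, ∀ e ∈ E, ‖γ t e.1 - γ t e.2‖ = ‖p e.1 - p e.2‖) →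
        ∀ t ∈ Set.Icc (0 : ℝ) 1, ∃ g : X ≃ᵢ X, ∀ v : V, g (p v) = γ t v) :=
  stmt14_general S hS hnorm E p
end
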